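/- arXiv:1903.04418 — 3 statements merged into one kernel-verified Lean document; each statement's English description precedes it below -/
import Mathlib

section
/- Let (v_1,...,v_m) induce a maximal clique of a finite graph G with final-clique property Γ_{v_k}(x) ≥ Γ_v(x) for all v ∈ D_{v_k}, where Γ_v(x) = exp(α x_v + β Σ_{u∼v} x_u). Suppose r particles have been added at vertex v_k and the remaining n−1−r particles of a length-(n−1) trajectory have all been added at vertices of the clique adjacent to v_k. Let y be the resulting configuration. Then the conditional probability, given the next particle lands in V_k = {v_k} ∪ D_{v_k}, that it lands at v_k satisfies Γ_{v_k}(y) / (Γ_{v_k}(y) + Σ_{v ∈ D_{v_k}} Γ_v(y)) ≥ 1/(1 + |V| e^{−α r}). -/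
/-!
Let s be the number of particles added away from v_k. Since they all sit at neighbours of v_k,
the exponent of Γ_{v_k} grows by exactly αr + βs. A vertex u ∈ D_{v_k} is neither v_k nor a
neighbour of it, so it receives no particle itself and at most s particles at its neighbours:
its exponent grows by at most βs. With the final-clique property this gives
Γ_u(y) ≤ Γ_{v_k}(y) e^{-αr}, and summing over the at most |V| vertices of D_{v_k} yields the bound.
-/

/-- Growth rate Γ_v(x) = exp(α x_v + β Σ_{u∼v} x_u). -/
noncomputable def growthRate {V : Type*} [Fintype V] [DecidableEq V]
    (G : SimpleGraph V) [DecidableRel G.Adj] (α β : ℝ) (x : V → ℕ) (w : V) : ℝ :=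
  Real.exp (α * (x w : ℝ) + β * ∑ u ∈ G.neighborFinset w, (x u : ℝ))

open Finset

lemma one_div_one_add_le_div_add {A S t : ℝ} (hA : 0 < A) (hS₀ : 0 ≤ S) (hS : S ≤ t * A) :
    1 / (1 + t) ≤ A / (A + S) :=
  calc 1 / (1 + t) = A / (A + t * A) := by
        rw [← one_add_mul, mul_comm, ← div_div, div_self hA.ne']
    _ ≤ A / (A + S) := div_le_div_of_nonneg_left hA.le (by linarith) (by linarith)

namespace growthRate

variable {V : Type*} [Fintype V] [DecidableEq V] {G : SimpleGraph V} [DecidableRel G.Adj]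
  {α β : ℝ} {x c : V → ℕ} {u w : V}

lemma pos : 0 < growthRate G α β x w := Real.exp_pos _

lemma add (x c : V → ℕ) (w : V) :
    growthRate G α β (x + c) w =
      growthRate G α β x w * Real.exp (α * c w + β * ∑ u ∈ G.neighborFinset w, (c u : ℝ)) := by
  simp only [growthRate, ← Real.exp_add, Pi.add_apply, Nat.cast_add, sum_add_distrib]
  ring_nf

variable (hc : ∀ u, c u ≠ 0 → u ≠ w → G.Adj u w)
include hc

lemma sum_neighborFinset_eq_sum_erase :
    ∑ u ∈ G.neighborFinset w, (c u : ℝ) = ∑ u ∈ univ.erase w, (c u : ℝ) := by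
  refine sum_subset (fun u hu => mem_erase.2 ⟨(G.ne_of_adj ((G.mem_neighborFinset _ _).1 hu)).symm,
    mem_univ _⟩) fun u hu hN => ?_
  by_contra h
  exact hN ((G.mem_neighborFinset _ _).2
    (hc u (by exact_mod_cast h) (mem_erase.1 hu).1).symm)

lemma add_self :
    growthRate G α β (x + c) w =
      growthRate G α β x w * Real.exp (α * c w + β * ∑ u ∈ univ.erase w, (c u : ℝ)) := by
  rw [add, sum_neighborFinset_eq_sum_erase hc]

lemma add_le_of_not_adj (hβ : 0 ≤ β) (hnadj : ¬ G.Adj u w) (hne : u ≠ w) :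
    growthRate G α β (x + c) u ≤
      growthRate G α β x u * Real.exp (β * ∑ u ∈ univ.erase w, (c u : ℝ)) := by
  have hcu : c u = 0 := by
    by_contra h
    exact hnadj (hc u h hne)
  have hsub : ∑ v ∈ G.neighborFinset u, (c v : ℝ) ≤ ∑ v ∈ univ.erase w, (c v : ℝ) := by
    refine sum_le_sum_of_subset_of_nonneg (fun v hv => mem_erase.2 ⟨?_, mem_univ _⟩)
      fun _ _ _ => by positivity
    rintro rfl
    exact hnadj ((G.mem_neighborFinset _ _).1 hv)
  rw [add, hcu, Nat.cast_zero, mul_zero, zero_add]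
  exact mul_le_mul_of_nonneg_left (Real.exp_le_exp.2 (by gcongr)) pos.le

lemma add_le_mul_exp_neg (hβ : 0 ≤ β) (hnadj : ¬ G.Adj u w) (hne : u ≠ w)
    (hle : growthRate G α β x u ≤ growthRate G α β x w) :
    growthRate G α β (x + c) u ≤ growthRate G α β (x + c) w * Real.exp (-(α * c w)) :=
  calc growthRate G α β (x + c) u
      ≤ growthRate G α β x u * Real.exp (β * ∑ u ∈ univ.erase w, (c u : ℝ)) :=
        add_le_of_not_adj hc hβ hnadj hne
    _ ≤ growthRate G α β x w * Real.exp (β * ∑ u ∈ univ.erase w, (c u : ℝ)) := by gcongr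
    _ = growthRate G α β (x + c) w * Real.exp (-(α * c w)) := by
        rw [add_self hc, mul_assoc, ← Real.exp_add]
        ring_nf

end growthRate

theorem final_clique_conditional_bound_general {V : Type*} [Fintype V] [DecidableEq V]
    (G : SimpleGraph V) [DecidableRel G.Adj]
    (α β : ℝ) (hα : 0 < α) (hab : α ≤ β)
    (m : ℕ) (v : Fin m → V)
    (k : Fin m) (D : Finset V)
    (hD : ∀ u : V, u ∈ D ↔ (¬ G.Adj u (v k) ∧ u ≠ v k ∧ ∀ j < k, G.Adj u (v j)))
    (x : V → ℕ)
    -- final-clique property: Γ_{v_k}(x) ≥ Γ_u(x) for all u in the D-set of v_k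
    (hfin : ∀ u ∈ D, growthRate G α β x u ≤ growthRate G α β x (v k))
    (r : ℕ) (c : V → ℕ)
    -- the added particles: r of them at v_k, the rest at clique vertices adjacent to v_k
    (hc_adj : ∀ u : V, c u ≠ 0 → u ≠ v k → G.Adj u (v k))
    (hr : c (v k) = r)
    (y : V → ℕ) (hy : y = fun u => x u + c u) :
    1 / (1 + (Fintype.card V : ℝ) * Real.exp (-(α * (r : ℝ)))) ≤
      growthRate G α β y (v k) /
        (growthRate G α β y (v k) + ∑ u ∈ D, growthRate G α β y u) := by
  obtain rfl : y = x + c := hy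
  have hbound : ∀ u ∈ D,
      growthRate G α β (x + c) u ≤ growthRate G α β (x + c) (v k) * Real.exp (-(α * r)) := by
    intro u hu
    obtain ⟨hnadj, hne, -⟩ := (hD u).1 hu
    rw [← hr]
    exact growthRate.add_le_mul_exp_neg hc_adj (hα.le.trans hab) hnadj hne (hfin u hu)
  refine one_div_one_add_le_div_add growthRate.pos
    (sum_nonneg fun _ _ => growthRate.pos.le) ?_
  calc ∑ u ∈ D, growthRate G α β (x + c) u
      ≤ D.card • (growthRate G α β (x + c) (v k) * Real.exp (-(α * r))) :=
        sum_le_card_nsmul _ _ _ hbound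
    _ ≤ Fintype.card V • (growthRate G α β (x + c) (v k) * Real.exp (-(α * r))) :=
        nsmul_le_nsmul_left (mul_nonneg growthRate.pos.le (Real.exp_pos _).le) (card_le_univ D)
    _ = Fintype.card V * Real.exp (-(α * r)) * growthRate G α β (x + c) (v k) := by
        rw [nsmul_eq_mul]; ring

/-- if r particles have been added at v_k and all other added particles sit
at clique vertices adjacent to v_k, then, in the resulting configuration y, the
probability (within V_k = {v_k} ∪ D_{v_k}) of choosing v_k is at least 1/(1+|V|e^{-αr}). -/
theorem final_clique_conditional_bound {V : Type*} [Fintype V] [DecidableEq V]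
    (G : SimpleGraph V) [DecidableRel G.Adj]
    (α β : ℝ) (hα : 0 < α) (hab : α ≤ β)
    (m : ℕ) (v : Fin m → V) (hinj : Function.Injective v)
    (hclique : G.IsClique (Set.range v))
    (hmax : ∀ T : Set V, G.IsClique T → Set.range v ⊆ T → T = Set.range v)
    (k : Fin m) (D : Finset V)
    (hD : ∀ u : V, u ∈ D ↔ (¬ G.Adj u (v k) ∧ u ≠ v k ∧ ∀ j < k, G.Adj u (v j)))
    (x : V → ℕ)
    -- final-clique property: Γ_{v_k}(x) ≥ Γ_u(x) for all u in the D-set of v_k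
    (hfin : ∀ u ∈ D, growthRate G α β x u ≤ growthRate G α β x (v k))
    (r : ℕ) (c : V → ℕ)
    -- the added particles: r of them at v_k, the rest at clique vertices adjacent to v_k
    (hc_supp : ∀ u : V, c u ≠ 0 → u ∈ Set.range v)
    (hc_adj : ∀ u : V, c u ≠ 0 → u ≠ v k → G.Adj u (v k))
    (hr : c (v k) = r)
    (y : V → ℕ) (hy : y = fun u => x u + c u) :
    1 / (1 + (Fintype.card V : ℝ) * Real.exp (-(α * (r : ℝ)))) ≤
      growthRate G α β y (v k) /
        (growthRate G α β y (v k) + ∑ u ∈ D, growthRate G α β y u) :=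
  final_clique_conditional_bound_general G α β hα hab m v k D hD x hfin r c hc_adj hr y hy
end

section
/- Let λ > 0, ε > 0, m ≥ 2, and a_1,...,a_{m−1} > 0. Consider the Markov chain Z(n) on ℤ^{m−1} with transitions: from state z, jump to z + e_i with probability a_i e^{−λ z_i}/W(z) for i = 1,...,m−1, and to z − (e_1+...+e_{m−1}) with probability 1/W(z), where W(z) = 1 + Σ_{j=1}^{m−1} a_j e^{−λ z_j}. Then with f(z) = Σ_{i=1}^{m−1} z_i², the one-step drift satisfies E[f(Z(n+1)) − f(Z(n)) | Z(n) = z] ≤ −ε whenever Σ_{i=1}^{m−1} |z_i| ≥ C, for some constant C = C(ε, λ, a_1,...,a_{m−1}, m). -/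
/-!
Writing `h(x) = (2x + 1 + ε) a e^{-λx} + 1 - 2x`, one has
`drift z + ε = (ε + Σ_i h_i(z_i)) / W(z)` with `W > 0`. Each `h_i` is continuous and tends to
`-∞` as `|x| → ∞` (the linear term wins at `+∞`, the exponential one at `-∞`), so it is bounded
above; once `Σ_i |z_i|` is large some `|z_i|` is large, and that single term `h_i(z_i)` drags the
whole sum below `-ε`.
-/

open Filter Real Finset Topology

noncomputable def driftTerm (a lam ε x : ℝ) : ℝ :=
  (2 * x + 1 + ε) * (a * exp (-lam * x)) + (1 - 2 * x)

lemma tendsto_affine_mul_exp_neg_mul_atTop {lam : ℝ} (hlam : 0 < lam) (b c : ℝ) :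
    Tendsto (fun x => (b * x + c) * exp (-lam * x)) atTop (𝓝 0) := by
  have h1 := tendsto_rpow_mul_exp_neg_mul_atTop_nhds_zero 1 lam hlam
  have h0 := tendsto_rpow_mul_exp_neg_mul_atTop_nhds_zero 0 lam hlam
  simp only [rpow_one, rpow_zero, one_mul] at h1 h0
  simpa [add_mul, mul_assoc] using (h1.const_mul b).add (h0.const_mul c)

lemma tendsto_driftTerm_atTop (a ε : ℝ) {lam : ℝ} (hlam : 0 < lam) :
    Tendsto (driftTerm a lam ε) atTop atBot := by
  have hdecay := tendsto_affine_mul_exp_neg_mul_atTop hlam (2 * a) ((1 + ε) * a)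
  have hlin : Tendsto (fun x : ℝ => 1 + -2 * x) atTop atBot :=
    tendsto_atBot_add_const_left _ 1 (tendsto_id.const_mul_atTop_of_neg (by norm_num))
  exact (hdecay.add_atBot hlin).congr fun x => by unfold driftTerm; ring

lemma tendsto_driftTerm_atBot {a : ℝ} (ha : 0 < a) (ε : ℝ) {lam : ℝ} (hlam : 0 < lam) :
    Tendsto (driftTerm a lam ε) atBot atBot := by
  have hgrowth : Tendsto (fun x => exp (-lam * x)) atBot atTop :=
    tendsto_exp_atTop.comp (tendsto_id.const_mul_atBot_of_neg (neg_lt_zero.2 hlam))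
  have hdecay : Tendsto (fun x => (1 - 2 * x) * exp (lam * x)) atBot (𝓝 0) :=
    ((tendsto_affine_mul_exp_neg_mul_atTop hlam 2 1).comp tendsto_neg_atBot_atTop).congr
      fun x => by simp only [Function.comp_apply, neg_mul_neg]; ring
  have hlin : Tendsto (fun x : ℝ => a * (2 * x + (1 + ε))) atBot atBot :=
    (tendsto_atBot_add_const_right _ _ (tendsto_id.const_mul_atBot two_pos)).const_mul_atBot ha
  refine (hgrowth.atTop_mul_atBot₀ (hdecay.add_atBot hlin)).congr fun x => ?_
  have hcancel : exp (-lam * x) * exp (lam * x) = 1 := by rw [← exp_add]; simp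
  unfold driftTerm
  linear_combination (1 - 2 * x) * hcancel

lemma tendsto_driftTerm_cocompact {a : ℝ} (ha : 0 < a) (ε : ℝ) {lam : ℝ} (hlam : 0 < lam) :
    Tendsto (driftTerm a lam ε) (cocompact ℝ) atBot := by
  rw [cocompact_eq_atBot_atTop]
  exact (tendsto_driftTerm_atBot ha ε hlam).sup (tendsto_driftTerm_atTop a ε hlam)

lemma continuous_driftTerm (a lam ε : ℝ) : Continuous (driftTerm a lam ε) := by
  unfold driftTerm; fun_prop

lemma add_sum_driftTerm {ι : Type*} [Fintype ι] (a : ι → ℝ) (lam ε : ℝ) (x : ι → ℝ) :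
    ε + ∑ i, driftTerm (a i) lam ε (x i) =
      (∑ i, (2 * x i + 1) * (a i * exp (-lam * x i))) + ∑ i, (1 - 2 * x i) +
        ε * (1 + ∑ i, a i * exp (-lam * x i)) := by
  have hterm : ∀ i, driftTerm (a i) lam ε (x i) = (2 * x i + 1) * (a i * exp (-lam * x i)) +
      (1 - 2 * x i) + ε * (a i * exp (-lam * x i)) := fun i => by unfold driftTerm; ring
  simp only [hterm, sum_add_distrib, mul_add, mul_sum]
  ring

lemma exists_sum_le_of_tendsto_cocompact {ι E : Type*} [Fintype ι] [Nonempty ι]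
    [NormedAddCommGroup E] [ProperSpace E] {g : ι → E → ℝ} (hg : ∀ i, Continuous (g i))
    (hlim : ∀ i, Tendsto (g i) (cocompact E) atBot) (K : ℝ) :
    ∃ C, ∀ x : ι → E, C ≤ ∑ i, ‖x i‖ → ∑ i, g i (x i) ≤ K := by
  choose xmax hmax using fun i => (hg i).exists_forall_ge (hlim i)
  set M := fun i => g i (xmax i)
  have hfar : ∀ i, ∃ R, ∀ y, R ≤ ‖y‖ → g i y ≤ K - ∑ j, M j + M i := fun i => by
    have := (hlim i).eventually (eventually_le_atBot (K - ∑ j, M j + M i))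
    rw [← Metric.cobounded_eq_cocompact, ← comap_norm_atTop, eventually_comap,
      eventually_atTop] at this
    obtain ⟨R, hR⟩ := this
    exact ⟨R, fun y hy => hR _ hy y rfl⟩
  choose R hR using hfar
  refine ⟨∑ i, R i, fun x hx => ?_⟩
  obtain ⟨i, -, hi⟩ := exists_le_of_sum_le univ_nonempty hx
  -- every other coordinate contributes at most its maximum
  have hothers : M i - g i (x i) ≤ ∑ j, (M j - g j (x j)) :=
    single_le_sum (fun j _ => sub_nonneg.2 (hmax j _)) (mem_univ i)
  rw [sum_sub_distrib] at hothers
  linarith [hR i _ hi]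

theorem drift_condition_general (d : ℕ) (lam ε : ℝ) (hlam : 0 < lam)
    (a : Fin (d + 1) → ℝ) (ha : ∀ i, 0 < a i)
    (W : (Fin (d + 1) → ℤ) → ℝ)
    (hW : ∀ z, W z = 1 + ∑ i, a i * Real.exp (-lam * (z i : ℝ)))
    (drift : (Fin (d + 1) → ℤ) → ℝ)
    -- explicit one-step expected change of f(z) = Σ z_i² for the chain that jumps to
    -- z + e_i with probability a_i e^{-λ z_i}/W(z) and to z - (1,...,1) with prob 1/W(z)
    (hdrift : ∀ z, drift z =
      ((∑ i, (2 * (z i : ℝ) + 1) * (a i * Real.exp (-lam * (z i : ℝ)))) +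
        ∑ i, (1 - 2 * (z i : ℝ))) / W z) :
    ∃ C : ℝ, ∀ z : Fin (d + 1) → ℤ,
      C ≤ ∑ i, |(z i : ℝ)| → drift z ≤ -ε := by
  obtain ⟨C, hC⟩ := exists_sum_le_of_tendsto_cocompact (fun i => continuous_driftTerm (a i) lam ε)
    (fun i => tendsto_driftTerm_cocompact (ha i) ε hlam) (-ε)
  refine ⟨C, fun z hz => ?_⟩
  have hWpos : 0 < W z := by
    rw [hW]
    exact add_pos_of_pos_of_nonneg one_pos
      (sum_nonneg fun i _ => (mul_pos (ha i) (exp_pos _)).le)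
  have hsum := hC (fun i => (z i : ℝ)) (by simpa only [Real.norm_eq_abs] using hz)
  have hidentity := add_sum_driftTerm a lam ε (fun i => (z i : ℝ))
  rw [← hW] at hidentity
  rw [hdrift, div_le_iff₀ hWpos]
  linarith

/-- Foster–Lyapunov drift condition for the difference chain. With
W(z) = 1 + Σ_i a_i e^{-λ z_i}, the one-step drift of f(z) = Σ z_i² equals
(Σ_i (2z_i+1) a_i e^{-λ z_i} + Σ_i (1 - 2z_i))/W(z), and it is ≤ -ε whenever
Σ_i |z_i| ≥ C for a suitable constant C. -/
theorem drift_condition (d : ℕ) (lam ε : ℝ) (hlam : 0 < lam) (hε : 0 < ε)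
    (a : Fin (d + 1) → ℝ) (ha : ∀ i, 0 < a i)
    (W : (Fin (d + 1) → ℤ) → ℝ)
    (hW : ∀ z, W z = 1 + ∑ i, a i * Real.exp (-lam * (z i : ℝ)))
    (drift : (Fin (d + 1) → ℤ) → ℝ)
    -- explicit one-step expected change of f(z) = Σ z_i² for the chain that jumps to
    -- z + e_i with probability a_i e^{-λ z_i}/W(z) and to z - (1,...,1) with prob 1/W(z)
    (hdrift : ∀ z, drift z =
      ((∑ i, (2 * (z i : ℝ) + 1) * (a i * Real.exp (-lam * (z i : ℝ)))) +
        ∑ i, (1 - 2 * (z i : ℝ))) / W z) :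
    ∃ C : ℝ, ∀ z : Fin (d + 1) → ℤ,
      C ≤ ∑ i, |(z i : ℝ)| → drift z ≤ -ε :=
  drift_condition_general d lam ε hlam a ha W hW drift hdrift
end

section
/- Let λ > 0, m ≥ 2, a_1,...,a_{m−1} > 0, and let Z(n) be the irreducible Markov chain on ℤ^{m−1} with transitions z → z + e_i with probability a_i e^{−λ z_i}/W(z) and z → z − (e_1+...+e_{m−1}) with probability 1/W(z), where W(z) = 1 + Σ_j a_j e^{−λ z_j}. Then Z(n) is positive recurrent. -/
/-!
Foster–Lyapunov drift plus a Krylov–Bogoliubov limit. For `V z = ∑ i, z i ^ 2`, one step of the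
chain gives `P V z - V z + 1 = (1 + ∑ i, ψᵢ (z i)) / W z` with
`ψᵢ t = aᵢ (2t + 2) e^{-λt} + 1 - 2t`. Each `ψᵢ` tends to `-∞` as `|t| → ∞` (for `t → -∞` because
`e^{-λt}` beats the linear term), so `V` decreases by at least `1` in expectation outside a finite
set `K`. Summing the drift inequality along the chain started at a point shows that the Cesàro
averages of the laws keep a mass bounded below on `K`; a pointwise limit of these averages along
an ultrafilter is then a nonzero, summable, stationary measure. The jumps `eᵢ` and
`-(1, …, 1)` generate `ℤ^{m-1}` as a monoid and all jump probabilities are positive, so this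
measure charges every state; normalizing it gives `π`.
-/

open Filter Finset Function Topology

lemma sum_le_finsum {S : Type*} {f : S → ℝ} (hf0 : 0 ≤ f) (hf : f.HasFiniteSupport)
    (A : Finset S) : ∑ x ∈ A, f x ≤ ∑ᶠ x, f x := by
  classical
  obtain ⟨t, ht⟩ := Set.Finite.exists_finset_coe hf
  rw [finsum_eq_sum_of_support_subset f (s := A ∪ t) (by simp [ht])]
  exact sum_le_sum_of_subset_of_nonneg subset_union_left fun x _ _ => hf0 x

lemma exists_le_add_ite_of_eventually_le {S : Type*} [DecidableEq S] {f g : S → ℝ}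
    (h : ∀ᶠ x in cofinite, f x ≤ g x) :
    ∃ (K : Finset S) (b : ℝ), ∀ x, f x ≤ g x + if x ∈ K then b else 0 := by
  set K := (eventually_cofinite.1 h).toFinset
  refine ⟨K, ∑ x ∈ K, max (f x - g x) 0, fun x => ?_⟩
  split_ifs with hx
  · linarith [le_max_left (f x - g x) 0,
      single_le_sum (fun y _ => le_max_right (f y - g y) 0) hx]
  · simpa [K] using hx

lemma IsCompact.exists_ultrafilter_tendsto {α X : Type*} [TopologicalSpace X] {s : Set X}
    (hs : IsCompact s) (l : Filter α) [l.NeBot] {u : α → X} (hu : ∀ n, u n ∈ s) :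
    ∃ U : Ultrafilter α, ↑U ≤ l ∧ ∃ x ∈ s, Tendsto u U (𝓝 x) := by
  obtain ⟨x, hx, hux⟩ := hs.ultrafilter_le_nhds ((Ultrafilter.of l).map u) (by
    rw [Ultrafilter.coe_map, le_principal_iff]
    exact mem_map.2 (univ_mem' hu))
  exact ⟨Ultrafilter.of l, Ultrafilter.of_le l, x, hx, hux⟩

lemma tendsto_sum_apply_cofinite_atBot {ι α : Type*} [Fintype ι] {f : ι → α → ℝ}
    (hf : ∀ i, Tendsto (f i) cofinite atBot) :
    Tendsto (fun y : ι → α => ∑ i, f i (y i)) cofinite atBot := by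
  classical
  choose M hM using fun i => (hf i).isBoundedUnder_le_atBot.bddAbove_range_of_cofinite
  rw [← coprodᵢ_cofinite, tendsto_atBot]
  intro c
  refine mem_coprodᵢ_iff.2 fun j => ⟨{t | f j t ≤ c - ∑ i ∈ univ.erase j, M i},
    tendsto_atBot.1 (hf j) _, fun y hy => ?_⟩
  have hrest : ∑ i ∈ univ.erase j, f i (y i) ≤ ∑ i ∈ univ.erase j, M i :=
    sum_le_sum fun i _ => hM i ⟨y i, rfl⟩
  change f j (y j) ≤ _ at hy
  change _ ≤ c
  rw [← add_sum_erase _ _ (mem_univ j)]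
  linarith

lemma sum_div_mul_le_sub_one {ι : Type*} [Fintype ι] {r v : ι → ℝ} {c : ℝ}
    (hr : 0 < ∑ o, r o) (h : ∑ o, r o * (v o - c + 1) ≤ 0) :
    ∑ o, r o / (∑ o', r o') * v o ≤ c - 1 := by
  simp only [div_mul_eq_mul_div, ← sum_div]
  rw [div_le_iff₀ hr]
  simp only [mul_add, mul_sub, mul_one, sum_add_distrib, sum_sub_distrib, ← sum_mul] at h
  linarith

namespace JumpChain

variable {S ι : Type*}

def Reach (e : ι → Equiv.Perm S) : S → S → Prop :=
  Relation.ReflTransGen fun x y => ∃ o, e o x = y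

lemma reach_addRight_of_mem_closure {G : Type*} [AddGroup G] {s : ι → G} {v : G}
    (hv : v ∈ AddSubmonoid.closure (Set.range s)) (x : G) :
    Reach (fun o => Equiv.addRight (s o)) x (x + v) := by
  induction hv using AddSubmonoid.closure_induction generalizing x with
  | mem _ h =>
    obtain ⟨o, rfl⟩ := h
    exact .single ⟨o, rfl⟩
  | zero => simpa using .refl
  | add u v _ _ hu hv =>
    rw [← add_assoc]
    exact (hu x).trans (hv (x + u))

variable [Fintype ι]

/-- The chain jumps from `x` to `e o x` with probability `p o x`; `transfer e p μ` is the law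
after one step when `μ` is the law before it. -/
def transfer (e : ι → Equiv.Perm S) (p : ι → S → ℝ) : (S → ℝ) →ₗ[ℝ] S → ℝ where
  toFun μ z := ∑ o, μ ((e o).symm z) * p o ((e o).symm z)
  map_add' μ ν := by ext z; simp only [Pi.add_apply, add_mul, sum_add_distrib]
  map_smul' c μ := by
    ext z; simp only [Pi.smul_apply, smul_eq_mul, mul_assoc, mul_sum, RingHom.id_apply]

structure IsStochastic (p : ι → S → ℝ) : Prop where
  nonneg : ∀ o x, 0 ≤ p o x
  sum_eq_one : ∀ x, ∑ o, p o x = 1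

variable {e : ι → Equiv.Perm S} {p : ι → S → ℝ}

lemma transfer_apply (μ : S → ℝ) (z : S) :
    transfer e p μ z = ∑ o, μ ((e o).symm z) * p o ((e o).symm z) := rfl

lemma continuous_transfer : Continuous (transfer e p) :=
  continuous_pi fun _ => continuous_finsetSum _ fun _ _ => (continuous_apply _).mul continuous_const

lemma transfer_nonneg (hp : ∀ o x, 0 ≤ p o x) {μ : S → ℝ} (hμ : 0 ≤ μ) :
    0 ≤ transfer e p μ :=
  fun _ => sum_nonneg fun _ _ => mul_nonneg (hμ _) (hp _ _)

lemma hasFiniteSupport_transfer {μ : S → ℝ} (hμ : μ.HasFiniteSupport) :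
    (transfer e p μ).HasFiniteSupport :=
  HasFiniteSupport.sum
    (fun o => (hμ.fun_comp_of_injective (e o).symm.injective).fun_mul_left _) _

lemma finsum_transfer_mul {μ : S → ℝ} (hμ : μ.HasFiniteSupport) (φ : S → ℝ) :
    ∑ᶠ z, transfer e p μ z * φ z = ∑ᶠ x, μ x * ∑ o, p o x * φ (e o x) := by
  set g : ι → S → ℝ := fun o x => μ x * p o x * φ (e o x)
  have hg (o : ι) : (g o).HasFiniteSupport := (hμ.fun_mul_left _).fun_mul_left _
  calc ∑ᶠ z, transfer e p μ z * φ z = ∑ᶠ z, ∑ o, g o ((e o).symm z) := by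
        simp only [transfer_apply, sum_mul, g, Equiv.apply_symm_apply]
    _ = ∑ o, ∑ᶠ z, g o ((e o).symm z) :=
        finsum_sum_comm _ _ fun o _ => (hg o).fun_comp_of_injective (e o).symm.injective
    _ = ∑ o, ∑ᶠ x, g o x := by simp only [finsum_comp_equiv]
    _ = ∑ᶠ x, μ x * ∑ o, p o x * φ (e o x) := by
        rw [← finsum_sum_comm _ _ fun o _ => hg o]
        simp only [mul_sum, mul_assoc]

lemma finsum_transfer (hp : ∀ x, ∑ o, p o x = 1) {μ : S → ℝ} (hμ : μ.HasFiniteSupport) :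
    ∑ᶠ z, transfer e p μ z = ∑ᶠ x, μ x := by
  simpa [hp] using finsum_transfer_mul (e := e) (p := p) hμ 1

lemma pos_of_reach (hp : ∀ o x, 0 < p o x) {π : S → ℝ} (hπ0 : 0 ≤ π)
    (hπ : transfer e p π = π) {x y : S} (hxy : Reach e x y) (hx : 0 < π x) : 0 < π y := by
  induction hxy with
  | refl => exact hx
  | @tail b _ _ hbc ih =>
    obtain ⟨o, rfl⟩ := hbc
    have hle := single_le_sum (s := univ)
      (fun o' _ => mul_nonneg (hπ0 ((e o').symm (e o b))) (hp o' ((e o').symm (e o b))).le)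
      (mem_univ o)
    rw [Equiv.symm_apply_apply] at hle
    rw [← hπ, transfer_apply]
    exact (mul_pos ih (hp o b)).trans_le hle

variable [DecidableEq S]

variable (e p) in
def law (x₀ : S) (k : ℕ) : S → ℝ := (transfer e p)^[k] (Pi.single x₀ 1)

variable {x₀ : S}

lemma law_zero : law e p x₀ 0 = Pi.single x₀ 1 := rfl

lemma law_succ (k : ℕ) : law e p x₀ (k + 1) = transfer e p (law e p x₀ k) :=
  Function.iterate_succ_apply' ..

lemma hasFiniteSupport_law (k : ℕ) : (law e p x₀ k).HasFiniteSupport := by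
  induction k with
  | zero => exact (Set.finite_singleton x₀).subset Pi.support_single_subset
  | succ k ih => rw [law_succ]; exact hasFiniteSupport_transfer ih

lemma law_nonneg (hp : ∀ o x, 0 ≤ p o x) (k : ℕ) : 0 ≤ law e p x₀ k := by
  induction k with
  | zero => exact Pi.single_nonneg.2 zero_le_one
  | succ k ih => rw [law_succ]; exact transfer_nonneg hp ih

lemma finsum_law (hp : ∀ x, ∑ o, p o x = 1) (k : ℕ) : ∑ᶠ x, law e p x₀ k x = 1 := by
  induction k with
  | zero => rw [law_zero, finsum_eq_single _ x₀ fun x hx => Pi.single_eq_of_ne hx 1]; simp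
  | succ k ih => rw [law_succ, finsum_transfer hp (hasFiniteSupport_law k), ih]

lemma sum_law_le_one (hp : IsStochastic p) (k : ℕ) (A : Finset S) :
    ∑ x ∈ A, law e p x₀ k x ≤ 1 :=
  (sum_le_finsum (law_nonneg hp.nonneg k) (hasFiniteSupport_law k) A).trans_eq
    (finsum_law hp.sum_eq_one k)

section Drift

variable {V : S → ℝ} {K : Finset S} {b : ℝ}

lemma finsum_law_succ_mul_le (hp : IsStochastic p)
    (hV : ∀ x, ∑ o, p o x * V (e o x) ≤ V x - 1 + if x ∈ K then b else 0) (k : ℕ) :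
    ∑ᶠ x, law e p x₀ (k + 1) x * V x
      ≤ ∑ᶠ x, law e p x₀ k x * V x - 1 + b * ∑ x ∈ K, law e p x₀ k x := by
  set μ := law e p x₀ k
  obtain ⟨t, ht⟩ := Set.Finite.exists_finset_coe (hasFiniteSupport_law k : μ.HasFiniteSupport)
  set s := K ∪ t
  have hs : support μ ⊆ s := by simp [s, ht, μ]
  have hsK : s ∩ K = K := inter_eq_right.2 subset_union_left
  rw [law_succ, finsum_transfer_mul (hasFiniteSupport_law k),
    finsum_eq_sum_of_support_subset _ ((support_mul_subset_left _ _).trans hs),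
    finsum_eq_sum_of_support_subset _ ((support_mul_subset_left _ _).trans hs),
    ← finsum_law hp.sum_eq_one k, finsum_eq_sum_of_support_subset _ hs]
  calc ∑ x ∈ s, μ x * ∑ o, p o x * V (e o x)
      ≤ ∑ x ∈ s, μ x * (V x - 1 + if x ∈ K then b else 0) :=
        sum_le_sum fun x _ => mul_le_mul_of_nonneg_left (hV x) (law_nonneg hp.nonneg k x)
    _ = ∑ x ∈ s, μ x * V x - ∑ x ∈ s, μ x + b * ∑ x ∈ K, μ x := by
        simp only [mul_add, mul_sub, mul_one, mul_ite, mul_zero, sum_add_distrib,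
          sum_sub_distrib, sum_ite_mem, hsK, ← sum_mul, mul_comm b]

lemma natCast_le_of_drift (hp : IsStochastic p) (hV0 : 0 ≤ V)
    (hV : ∀ x, ∑ o, p o x * V (e o x) ≤ V x - 1 + if x ∈ K then b else 0) (n : ℕ) :
    (n : ℝ) ≤ V x₀ + b * ∑ k ∈ range n, ∑ x ∈ K, law e p x₀ k x := by
  suffices ∑ᶠ x, law e p x₀ n x * V x + n
      ≤ V x₀ + b * ∑ k ∈ range n, ∑ x ∈ K, law e p x₀ k x by
    linarith [finsum_nonneg fun x =>
      mul_nonneg (law_nonneg (e := e) (x₀ := x₀) hp.nonneg n x) (hV0 x)]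
  induction n with
  | zero =>
    rw [law_zero, finsum_eq_single _ x₀ fun x hx => by simp [Pi.single_eq_of_ne hx]]
    simp
  | succ n ih =>
    rw [sum_range_succ, mul_add]
    push_cast
    linarith [finsum_law_succ_mul_le (x₀ := x₀) hp hV n]

end Drift

variable (e p) in
noncomputable def avgLaw (x₀ : S) (n : ℕ) : S → ℝ := (n : ℝ)⁻¹ • ∑ k ∈ range n, law e p x₀ k

lemma sum_avgLaw (n : ℕ) (A : Finset S) :
    ∑ x ∈ A, avgLaw e p x₀ n x = (n : ℝ)⁻¹ * ∑ k ∈ range n, ∑ x ∈ A, law e p x₀ k x := by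
  simp only [avgLaw, Pi.smul_apply, Finset.sum_apply, smul_eq_mul, ← mul_sum]
  rw [sum_comm]

lemma sum_avgLaw_le_one (hp : IsStochastic p) (n : ℕ) (A : Finset S) :
    ∑ x ∈ A, avgLaw e p x₀ n x ≤ 1 := by
  rw [sum_avgLaw]
  refine (mul_le_mul_of_nonneg_left ?_ (by positivity)).trans (inv_mul_le_one (a := (n : ℝ)))
  simpa using sum_le_sum fun k (_ : k ∈ range n) => sum_law_le_one (x₀ := x₀) hp k A

lemma avgLaw_mem_Icc (hp : IsStochastic p) (n : ℕ) :
    avgLaw e p x₀ n ∈ Set.univ.pi fun _ => Set.Icc 0 1 := fun x _ =>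
  ⟨smul_nonneg (by positivity) (sum_nonneg fun k _ => law_nonneg hp.nonneg k) x,
    by simpa using sum_avgLaw_le_one (x₀ := x₀) hp n {x}⟩

lemma eventually_le_sum_avgLaw (hp : IsStochastic p) {V : S → ℝ} (hV0 : 0 ≤ V)
    {K : Finset S} {b : ℝ}
    (hV : ∀ x, ∑ o, p o x * V (e o x) ≤ V x - 1 + if x ∈ K then b else 0) :
    ∀ᶠ n in atTop, 1 / 2 ≤ b * ∑ x ∈ K, avgLaw e p x₀ n x := by
  filter_upwards [eventually_gt_atTop 0, eventually_ge_atTop ⌈2 * V x₀⌉₊] with n hn hVn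
  have hn' : (0 : ℝ) < n := by exact_mod_cast hn
  have hVn' : 2 * V x₀ ≤ n := Nat.ceil_le.1 hVn
  rw [sum_avgLaw, mul_left_comm, le_inv_mul_iff₀ hn']
  linarith [natCast_le_of_drift (x₀ := x₀) hp hV0 hV n]

lemma transfer_avgLaw_sub (n : ℕ) :
    transfer e p (avgLaw e p x₀ n) - avgLaw e p x₀ n
      = (n : ℝ)⁻¹ • (law e p x₀ n - law e p x₀ 0) := by
  simp only [avgLaw, map_smul, map_sum, ← law_succ, ← smul_sub, ← sum_sub_distrib,
    sum_range_sub (law e p x₀)]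

lemma tendsto_transfer_avgLaw_sub (hp : IsStochastic p) :
    Tendsto (fun n => transfer e p (avgLaw e p x₀ n) - avgLaw e p x₀ n) atTop (𝓝 0) := by
  have hle (k : ℕ) (x : S) : law e p x₀ k x ≤ 1 := by
    simpa using sum_law_le_one (x₀ := x₀) hp k {x}
  refine tendsto_pi_nhds.2 fun x => squeeze_zero_norm (fun n => ?_)
    tendsto_inv_atTop_nhds_zero_nat
  rw [transfer_avgLaw_sub, Pi.smul_apply, Pi.sub_apply, norm_smul, norm_inv, Real.norm_natCast]
  have h0 (k : ℕ) : 0 ≤ law e p x₀ k x := law_nonneg hp.nonneg k x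
  refine mul_le_of_le_one_right (by positivity) (abs_sub_le_iff.2 ⟨?_, ?_⟩) <;>
    linarith [hle n x, hle 0 x, h0 n, h0 0]

theorem exists_stationary_of_drift [Nonempty S] (hp : IsStochastic p) {V : S → ℝ}
    (hV0 : 0 ≤ V) (hV : ∀ᶠ x in cofinite, ∑ o, p o x * V (e o x) ≤ V x - 1) :
    ∃ π : S → ℝ, 0 ≤ π ∧ Summable π ∧ π ≠ 0 ∧ transfer e p π = π := by
  obtain ⟨K, b, hKb⟩ := exists_le_add_ite_of_eventually_le hV
  obtain ⟨x₀⟩ := ‹Nonempty S›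
  set ν := avgLaw e p x₀
  obtain ⟨U, hU, π, hπ01, hνπ⟩ := IsCompact.exists_ultrafilter_tendsto
    (isCompact_univ_pi fun _ => isCompact_Icc) atTop fun n => avgLaw_mem_Icc hp n
  have hsum (A : Finset S) : Tendsto (fun n => ∑ x ∈ A, ν n x) U (𝓝 (∑ x ∈ A, π x)) :=
    tendsto_finsetSum A fun x _ => tendsto_pi_nhds.1 hνπ x
  have hπ0 : 0 ≤ π := fun x => (hπ01 x trivial).1
  have hK : 1 / 2 ≤ b * ∑ x ∈ K, π x := ge_of_tendsto ((hsum K).const_mul b)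
    ((eventually_le_sum_avgLaw hp hV0 hKb).filter_mono hU)
  have hlim : Tendsto (fun n => transfer e p (ν n) - ν n) U (𝓝 (transfer e p π - π)) :=
    ((continuous_transfer.tendsto π).comp hνπ).sub hνπ
  refine ⟨π, hπ0, summable_of_sum_le hπ0 fun A =>
    le_of_tendsto' (hsum A) fun n => sum_avgLaw_le_one hp n A, ?_, ?_⟩
  · rintro rfl
    norm_num at hK
  · exact sub_eq_zero.1
      (tendsto_nhds_unique hlim ((tendsto_transfer_avgLaw_sub hp).mono_left hU))

theorem exists_pos_stationary_of_drift [Nonempty S] (hp : ∀ o x, 0 < p o x)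
    (hp1 : ∀ x, ∑ o, p o x = 1) (hirr : ∀ x y, Reach e x y) {V : S → ℝ} (hV0 : 0 ≤ V)
    (hV : ∀ᶠ x in cofinite, ∑ o, p o x * V (e o x) ≤ V x - 1) :
    ∃ π : S → ℝ, (∀ x, 0 < π x) ∧ HasSum π 1 ∧ transfer e p π = π := by
  obtain ⟨g, hg0, hgs, hg_ne, hg⟩ :=
    exists_stationary_of_drift ⟨fun o x => (hp o x).le, hp1⟩ hV0 hV
  obtain ⟨x, hx⟩ := Function.ne_iff.1 hg_ne
  have hgx : 0 < g x := (hg0 x).lt_of_ne' hx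
  have htot : 0 < ∑' x, g x := hgs.tsum_pos hg0 x hgx
  refine ⟨(∑' x, g x)⁻¹ • g,
    fun y => mul_pos (inv_pos.2 htot) (pos_of_reach hp hg0 hg (hirr x y) hgx), ?_,
    by rw [map_smul, hg]⟩
  show HasSum (fun x => (∑' x, g x)⁻¹ * g x) 1
  simpa [inv_mul_cancel₀ htot.ne'] using hgs.hasSum.mul_left (∑' x, g x)⁻¹

end JumpChain

namespace DifferenceChain

open Real

noncomputable def driftTerm (lam α t : ℝ) : ℝ := α * (2 * t + 2) * exp (-lam * t) + 1 - 2 * t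

lemma tendsto_driftTerm {lam α : ℝ} (hlam : 0 < lam) (hα : 0 < α) :
    Tendsto (driftTerm lam α) (cocompact ℝ) atBot := by
  rw [cocompact_eq_atBot_atTop, tendsto_sup]
  constructor
  · have hlin : Tendsto (fun t : ℝ => -2 * α * lam * t - 2 * α * lam - 2) atBot atTop :=
      tendsto_atTop_add_const_right _ _ <| tendsto_atTop_add_const_right _ _ <|
        tendsto_id.const_mul_atBot_of_neg (by nlinarith)
    refine tendsto_atBot_mono' _ ?_
      (tendsto_atBot_add_const_left _ 1 (tendsto_id.atBot_mul_atTop₀ hlin))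
    filter_upwards [eventually_le_atBot (-1)] with t ht
    have hexp : -lam * t ≤ exp (-lam * t) := by linarith [add_one_le_exp (-lam * t)]
    have := mul_le_mul_of_nonpos_left hexp (by nlinarith : α * (2 * t + 2) ≤ 0)
    simp only [driftTerm, id]
    nlinarith
  · refine tendsto_atBot_mono' _ ?_ (tendsto_atBot_add_const_left _ (α * (2 + 2 / lam) + 1)
      (tendsto_id.const_mul_atTop_of_neg (by norm_num : (-2 : ℝ) < 0)))
    filter_upwards [eventually_ge_atTop 0] with t ht
    have hexp : 1 + lam * t ≤ exp (lam * t) := by linarith [add_one_le_exp (lam * t)]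
    have hbound : (2 * t + 2) * exp (-lam * t) ≤ 2 + 2 / lam := by
      rw [neg_mul, exp_neg, ← div_eq_mul_inv, div_le_iff₀ (exp_pos _)]
      have : 2 * t + 2 ≤ (2 + 2 / lam) * (1 + lam * t) := by
        field_simp
        nlinarith [mul_nonneg (mul_nonneg hlam.le hlam.le) ht]
      exact this.trans (mul_le_mul_of_nonneg_left hexp (by positivity))
    have := mul_le_mul_of_nonneg_left hbound hα.le
    simp only [driftTerm, id]
    nlinarith

variable {ι : Type*}

section Steps

variable [DecidableEq ι]

def shift : Option ι → ι → ℤ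
  | some i => Pi.single i 1
  | none => -1

def step (o : Option ι) : Equiv.Perm (ι → ℤ) := Equiv.addRight (shift o)

lemma step_symm_some (i : ι) (z : ι → ℤ) :
    (step (some i)).symm z = fun j => z j - if j = i then 1 else 0 := by
  funext j
  simp [step, shift, Pi.single_apply, sub_eq_add_neg]

lemma step_symm_none (z : ι → ℤ) : (step none).symm z = fun j => z j + 1 := by
  funext j
  simp [step, shift]

end Steps

noncomputable def rate (lam : ℝ) (a : ι → ℝ) : Option ι → (ι → ℤ) → ℝ
  | some i, z => a i * exp (-lam * z i)
  | none, _ => 1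

lemma rate_pos {lam : ℝ} {a : ι → ℝ} (ha : ∀ i, 0 < a i) (o : Option ι) (z : ι → ℤ) :
    0 < rate lam a o z := by
  cases o
  exacts [one_pos, mul_pos (ha _) (exp_pos _)]

variable [Fintype ι]

lemma sum_rate (lam : ℝ) (a : ι → ℝ) (z : ι → ℤ) :
    ∑ o, rate lam a o z = 1 + ∑ i, a i * exp (-lam * z i) := by
  rw [Fintype.sum_option]
  rfl

noncomputable def sqNorm (z : ι → ℤ) : ℝ := ∑ i, (z i : ℝ) ^ 2

lemma sqNorm_nonneg : 0 ≤ sqNorm (ι := ι) := fun _ => sum_nonneg fun _ _ => sq_nonneg _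

variable [DecidableEq ι]

lemma sqNorm_step_sub (o : Option ι) (z : ι → ℤ) :
    sqNorm (step o z) - sqNorm z = ∑ i, (2 * (z i : ℝ) + shift o i) * shift o i := by
  unfold sqNorm
  rw [← sum_sub_distrib]
  refine Finset.sum_congr rfl fun i _ => ?_
  simp only [step, Equiv.coe_addRight, Pi.add_apply]
  push_cast
  ring

lemma sum_rate_mul_sqNorm_step (lam : ℝ) (a : ι → ℝ) (z : ι → ℤ) :
    ∑ o, rate lam a o z * (sqNorm (step o z) - sqNorm z + 1)
      = 1 + ∑ i, driftTerm lam (a i) (z i) := by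
  simp only [Fintype.sum_option, sqNorm_step_sub, shift, rate, Pi.single_apply]
  simp [driftTerm, sum_add_distrib, sum_sub_distrib]
  ring_nf

lemma eventually_drift_sqNorm {lam : ℝ} (hlam : 0 < lam) {a : ι → ℝ} (ha : ∀ i, 0 < a i) :
    ∀ᶠ z in cofinite, ∑ o, rate lam a o z / (∑ o', rate lam a o' z) * sqNorm (step o z)
      ≤ sqNorm z - 1 := by
  have hlim : Tendsto (fun z : ι → ℤ => 1 + ∑ i, driftTerm lam (a i) (z i)) cofinite atBot :=
    tendsto_atBot_add_const_left _ 1 <|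
      tendsto_sum_apply_cofinite_atBot (f := fun i (t : ℤ) => driftTerm lam (a i) t) fun i =>
        (tendsto_driftTerm hlam (ha i)).comp Int.tendsto_coe_cofinite
  filter_upwards [hlim.eventually (eventually_le_atBot 0)] with z hz
  refine sum_div_mul_le_sub_one (sum_pos (fun o _ => rate_pos ha o z) univ_nonempty) ?_
  rwa [sum_rate_mul_sqNorm_step]

lemma closure_range_shift : AddSubmonoid.closure (Set.range (shift (ι := ι))) = ⊤ := by
  set M := AddSubmonoid.closure (Set.range (shift (ι := ι)))
  have hsingle (i : ι) : Pi.single i 1 ∈ M := AddSubmonoid.subset_closure ⟨some i, rfl⟩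
  have hneg (i : ι) : -Pi.single i 1 ∈ M := by
    have h1 : (-1 : ι → ℤ) ∈ M := AddSubmonoid.subset_closure ⟨none, rfl⟩
    convert add_mem h1 (sum_mem fun j (_ : j ∈ univ.erase i) => hsingle j) using 1
    rw [sum_erase_eq_sub (mem_univ i), univ_sum_single (fun _ => (1 : ℤ))]
    abel
  have hgrp :
      (AddSubgroup.closure (Set.range fun i => Pi.single i (1 : ℤ))).toAddSubmonoid ≤ M := by
    rw [AddSubgroup.closure_toAddSubmonoid, AddSubmonoid.closure_le]
    rintro _ (⟨i, rfl⟩ | ⟨i, hi⟩)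
    · exact hsingle i
    · simpa [hi] using hneg i
  refine eq_top_iff.2 fun v _ => hgrp ?_
  rw [← univ_sum_single v]
  refine sum_mem fun i _ => ?_
  have h := zsmul_mem (AddSubgroup.subset_closure (k := Set.range fun i => Pi.single i (1 : ℤ))
    ⟨i, rfl⟩) (v i)
  rw [← Pi.single_smul, smul_eq_mul, mul_one] at h
  exact h

lemma reach_step (x y : ι → ℤ) : JumpChain.Reach step x y := by
  have h := JumpChain.reach_addRight_of_mem_closure
    (closure_range_shift (ι := ι) ▸ AddSubmonoid.mem_top (y - x)) x
  rwa [add_sub_cancel] at h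

lemma transfer_step_apply (lam : ℝ) (a : ι → ℝ) (W μ : (ι → ℤ) → ℝ) (z : ι → ℤ) :
    JumpChain.transfer step (fun o z => rate lam a o z / W z) μ z
      = (∑ i, μ (fun j => z j - if j = i then 1 else 0) *
            (a i * exp (-lam * ((z i : ℝ) - 1)) / W (fun j => z j - if j = i then 1 else 0))) +
          μ (fun j => z j + 1) * (1 / W (fun j => z j + 1)) := by
  rw [JumpChain.transfer_apply, Fintype.sum_option, add_comm]
  simp [step_symm_some, step_symm_none, rate]

theorem exists_pos_stationary {lam : ℝ} (hlam : 0 < lam) {a : ι → ℝ} (ha : ∀ i, 0 < a i)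
    {W : (ι → ℤ) → ℝ} (hW : ∀ z, W z = 1 + ∑ j, a j * exp (-lam * z j)) :
    ∃ μ : (ι → ℤ) → ℝ, (∀ z, 0 < μ z) ∧ HasSum μ 1 ∧
      JumpChain.transfer step (fun o z => rate lam a o z / W z) μ = μ := by
  have hW' (z : ι → ℤ) : W z = ∑ o, rate lam a o z := (hW z).trans (sum_rate lam a z).symm
  have hWpos (z : ι → ℤ) : 0 < W z :=
    hW' z ▸ sum_pos (fun o _ => rate_pos ha o z) univ_nonempty
  refine JumpChain.exists_pos_stationary_of_drift
    (fun o z => div_pos (rate_pos ha o z) (hWpos z))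
    (fun z => by rw [← sum_div, div_eq_one_iff_eq (hWpos z).ne', hW']) reach_step
    sqNorm_nonneg ?_
  simpa only [hW'] using eventually_drift_sqNorm hlam ha

end DifferenceChain

/-- the difference chain on ℤ^{m-1} (m = d+2), jumping from z to z + e_i with
probability a_i e^{-λ z_i}/W(z) and to z - (e_1+...+e_{m-1}) with probability 1/W(z),
W(z) = 1 + Σ_j a_j e^{-λ z_j}, is positive recurrent: it admits a (strictly positive,
summable) stationary probability distribution. -/
theorem difference_chain_positive_recurrent (d : ℕ) (lam : ℝ) (hlam : 0 < lam)
    (a : Fin (d + 1) → ℝ) (ha : ∀ i, 0 < a i)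
    (W : (Fin (d + 1) → ℤ) → ℝ)
    (hW : ∀ z, W z = 1 + ∑ j, a j * Real.exp (-lam * (z j : ℝ))) :
    ∃ π : (Fin (d + 1) → ℤ) → ℝ,
      (∀ z, 0 < π z) ∧ Summable π ∧ (∑' z, π z) = 1 ∧
      -- stationarity: the mass at z comes from the up-jumps z - e_i → z and
      -- the down-jump z + (1,...,1) → z
      (∀ z : Fin (d + 1) → ℤ,
        π z =
          (∑ i, π (fun j => z j - if j = i then 1 else 0) *
            (a i * Real.exp (-lam * ((z i : ℝ) - 1)) /
              W (fun j => z j - if j = i then 1 else 0))) +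
          π (fun j => z j + 1) * (1 / W (fun j => z j + 1))) := by
  obtain ⟨π, hπ, hsum, hstat⟩ := DifferenceChain.exists_pos_stationary hlam ha hW
  refine ⟨π, hπ, hsum.summable, hsum.tsum_eq, fun z => ?_⟩
  rw [← DifferenceChain.transfer_step_apply, hstat]
end
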